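/- Let X be a finite-dimensional H-module admitting a positive definite •-invariant hermitian form, where H is the graded affine Hecke algebra with equal parameters. If D is the Dirac operator on X ⊗ S and D² = −Ω ⊗ 1 + Δ(Ω_{W̃}), then the central character ν of X satisfies |Re ν|² − |Im ν|² ≥ max{σ̃(Ω_{W̃}) : σ̃ appearing in X ⊗ S}. -/

import Mathlib

theorem LinearMap.IsPositive.nonneg_of_apply_eq_ofReal_smul {𝕜 E : Type*} [RCLike 𝕜]
    [NormedAddCommGroup E] [InnerProductSpace 𝕜 E] {T : E →ₗ[𝕜] E} (hT : T.IsPositive)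
    {b : ℝ} {x : E} (hx : x ≠ 0) (hTx : T x = (b : 𝕜) • x) : 0 ≤ b := by
  have hre : 0 ≤ b * ‖x‖ ^ 2 := by
    simpa only [hTx, inner_smul_real_left, RCLike.smul_re, inner_self_eq_norm_sq]
      using hT.re_inner_nonneg_left x
  exact nonneg_of_mul_nonneg_left hre (by positivity)

/-- Dirac inequality for `•`-unitary modules: if the (positive definite) form makes the
Dirac operator `D` on `X ⊗ S` skew-adjoint and `D² = −(|Re ν|² − |Im ν|²)·Id + A`, where
`A` is the action of `Δ(Ω_{W̃})`, then for each scalar `a` by which `Ω_{W̃}` acts on a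
`W̃`-type occurring in `X ⊗ S` (i.e. each eigenvalue of `A`) one has
`|Re ν|² − |Im ν|² ≥ a`; in particular the central character `ν` satisfies
`|Re ν|² − |Im ν|² ≥ max{σ̃(Ω_{W̃})}`. -/
theorem stmt13 {E Vr : Type*} [NormedAddCommGroup E] [InnerProductSpace ℂ E]
    [FiniteDimensional ℂ E] [NormedAddCommGroup Vr] [InnerProductSpace ℝ Vr]
    (νre νim : Vr) (D A : E →ₗ[ℂ] E)
    (hskew : LinearMap.adjoint D = -D)
    (hD2 : D ∘ₗ D = A - (((‖νre‖ ^ 2 - ‖νim‖ ^ 2 : ℝ) : ℂ)) • LinearMap.id) :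
    ∀ a : ℝ, (∃ x : E, x ≠ 0 ∧ A x = (a : ℂ) • x) → a ≤ ‖νre‖ ^ 2 - ‖νim‖ ^ 2 := by
  rintro a ⟨x, hx, hAx⟩
  set c : ℝ := ‖νre‖ ^ 2 - ‖νim‖ ^ 2
  set T : E →ₗ[ℂ] E := (c : ℂ) • LinearMap.id - A
  have hT : T.IsPositive := by
    have hTD : T = LinearMap.adjoint D ∘ₗ D := by
      rw [hskew, LinearMap.neg_comp, hD2, neg_sub]
    exact hTD ▸ D.isPositive_adjoint_comp_self
  have hTx : T x = ((c - a : ℝ) : ℂ) • x := by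
    simp [T, hAx, sub_smul]
  linarith [hT.nonneg_of_apply_eq_ofReal_smul (b := c - a) hx hTx]
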